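/- For every nonnegative integer n and a variable q (with the denominators nonzero), sum_{j=0}^{2n} (-1;q)_j q^j / (q;q)_j = (-q;q)_{2n} / (q;q)_{2n}. -/
import Mathlib

/-- `(A;q)_n` -/
noncomputable def qp (q a : ℂ) (n : ℕ) : ℂ :=
  ∏ k ∈ Finset.range n, (1 - a * q ^ k)

lemma qp_succ (q a : ℂ) (n : ℕ) : qp q a (n + 1) = qp q a n * (1 - a * q ^ n) := by
  simp [qp, Finset.prod_range_succ]

lemma qp_neg_one (q : ℂ) (m : ℕ) : qp q (-1) (m + 1) = 2 * qp q (-q) m := by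
  unfold qp
  rw [Finset.prod_range_succ']
  have : ∀ k ∈ Finset.range m, (1 - (-1 : ℂ) * q ^ (k + 1)) = 1 - (-q) * q ^ k := by
    intro k _; ring
  rw [Finset.prod_congr rfl this]; ring

lemma sum_eq_ratio_gen (q : ℂ) (m : ℕ) (h : qp q q m ≠ 0) :
    ∑ j ∈ Finset.range (m + 1), qp q (-1) j * q ^ j / qp q q j =
      qp q (-q) m / qp q q m := by
  induction m with
  | zero => simp [qp]
  | succ m ih =>
    rw [qp_succ] at h
    have hm : qp q q m ≠ 0 := left_ne_zero_of_mul h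
    have hf : (1 - q * q ^ m) ≠ 0 := right_ne_zero_of_mul h
    rw [Finset.sum_range_succ, ih hm, qp_succ q (-q), qp_succ q q, qp_neg_one]
    field_simp
    ring

theorem sum_eq_ratio (q : ℂ) (n : ℕ) (h : qp q q (2 * n) ≠ 0) :
    ∑ j ∈ Finset.range (2 * n + 1), qp q (-1) j * q ^ j / qp q q j =
      qp q (-q) (2 * n) / qp q q (2 * n) := by
  exact sum_eq_ratio_gen q (2 * n) h
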